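/- Let η ∈ C^∞(ℝ₊) with η ≡ 0 on [0,1] and η ≡ 1 on [2,∞), and for each two-cluster decomposition Z = (Z₁, Z₂) define ζ_Z : ℝ^{3N} → [0,1] by ζ_Z(X) = ∏_{j∈Z₁, n∈Z₂} η(2|x_j − x_n| N^{3/2}/|X|) · ∏_{n∈Z₂} η(2|x_n| N^{3/2}/|X|) · η(2|X|) if Z₂ ≠ ∅, and ζ_Z(X) = 1 − η(2|X|) if Z₂ = ∅. Then Σ_Z ζ_Z(X) ≥ 1 for all X ∈ ℝ^{3N}. -/
import Mathlib


/-- With `η` smooth, `0 ≤ η ≤ 1`, `η ≡ 0` on `[0,1]` and `η ≡ 1` on `[2,∞)`, and with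
`ζ_Z(X) = ∏_{j∈Z₁,n∈Z₂} η(2|x_j−x_n| N^{3/2}/|X|) ∏_{n∈Z₂} η(2|x_n| N^{3/2}/|X|) η(2|X|)`
for `Z₂ ≠ ∅` and `ζ_{(I,∅)}(X) = 1 − η(2|X|)`, the sum over all two-cluster
decompositions satisfies `Σ_Z ζ_Z(X) ≥ 1` for all `X ∈ ℝ^{3N}`. -/
theorem statement6 (N : ℕ) (hN : 0 < N) (η : ℝ → ℝ)
    (hsmooth : ContDiff ℝ (⊤ : ℕ∞) η) (hrange : ∀ t, 0 ≤ η t ∧ η t ≤ 1)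
    (h0 : ∀ t ≤ (1 : ℝ), η t = 0) (h1 : ∀ t, (2 : ℝ) ≤ t → η t = 1)
    (X : Fin N → EuclideanSpace ℝ (Fin 3)) :
    1 ≤ ∑ Z₂ : Finset (Fin N),
      (if Z₂ = (∅ : Finset (Fin N)) then
        1 - η (2 * Real.sqrt (∑ j, ‖X j‖ ^ 2))
      else
        (∏ j ∈ Z₂ᶜ, ∏ n ∈ Z₂,
            η (2 * ‖X j - X n‖ * (N : ℝ) ^ ((3 : ℝ) / 2) / Real.sqrt (∑ j, ‖X j‖ ^ 2)))
          * (∏ n ∈ Z₂,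
              η (2 * ‖X n‖ * (N : ℝ) ^ ((3 : ℝ) / 2) / Real.sqrt (∑ j, ‖X j‖ ^ 2)))
          * η (2 * Real.sqrt (∑ j, ‖X j‖ ^ 2))) := by
  classical
  set s := Real.sqrt (∑ j, ‖X j‖ ^ 2) with hs
  set P : ℝ := (N : ℝ) ^ ((3 : ℝ) / 2) with hPdef
  have hNpos : (0 : ℝ) < N := by exact_mod_cast hN
  have hPpos : 0 < P := Real.rpow_pos_of_pos hNpos _
  have hs0 : 0 ≤ s := Real.sqrt_nonneg _
  set f : Finset (Fin N) → ℝ := fun Z₂ =>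
      (if Z₂ = (∅ : Finset (Fin N)) then
        1 - η (2 * s)
      else
        (∏ j ∈ Z₂ᶜ, ∏ n ∈ Z₂, η (2 * ‖X j - X n‖ * P / s))
          * (∏ n ∈ Z₂, η (2 * ‖X n‖ * P / s))
          * η (2 * s)) with hf
  show 1 ≤ ∑ Z₂ : Finset (Fin N), f Z₂
  have hfnonneg : ∀ Z₂, 0 ≤ f Z₂ := by
    intro Z₂
    simp only [hf]
    split
    · linarith [(hrange (2 * s)).2]
    · exact mul_nonneg (mul_nonneg
        (Finset.prod_nonneg fun j _ => Finset.prod_nonneg fun n _ => (hrange _).1)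
        (Finset.prod_nonneg fun n _ => (hrange _).1)) (hrange _).1
  by_cases hsmall : s ≤ 1 / 2
  · have hempty : f ∅ = 1 := by
      simp only [hf, if_pos rfl, h0 (2 * s) (by linarith)]
      ring
    calc (1 : ℝ) = f ∅ := hempty.symm
      _ ≤ ∑ Z₂ : Finset (Fin N), f Z₂ :=
        Finset.single_le_sum (fun Z₂ _ => hfnonneg Z₂) (Finset.mem_univ _)
  · push_neg at hsmall
    have hspos : 0 < s := by linarith
    obtain ⟨δ, hδdef⟩ : ∃ δ : ℝ, δ = s / P := ⟨_, rfl⟩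
    have hδpos : 0 < δ := hδdef ▸ div_pos hspos hPpos
    -- max index
    obtain ⟨m, -, hm⟩ := Finset.exists_max_image (Finset.univ : Finset (Fin N))
      (fun j => ‖X j‖) ⟨⟨0, hN⟩, Finset.mem_univ _⟩
    have hm' : ∀ j : Fin N, ‖X j‖ ≤ ‖X m‖ := fun j => hm j (Finset.mem_univ j)
    -- ‖X m‖ ≥ N δ
    have hsum_le : s ^ 2 ≤ (N : ℝ) * ‖X m‖ ^ 2 := by
      have : s ^ 2 = ∑ j, ‖X j‖ ^ 2 := Real.sq_sqrt (Finset.sum_nonneg fun j _ => sq_nonneg _)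
      rw [this]
      calc ∑ j, ‖X j‖ ^ 2 ≤ ∑ _j : Fin N, ‖X m‖ ^ 2 :=
            Finset.sum_le_sum fun j _ => pow_le_pow_left₀ (norm_nonneg _) (hm' j) 2
        _ = (N : ℝ) * ‖X m‖ ^ 2 := by simp [mul_comm]
    have hP2 : P ^ 2 = (N : ℝ) ^ (3 : ℕ) := by
      rw [hPdef, ← Real.rpow_natCast ((N:ℝ) ^ ((3:ℝ)/2)) 2, ← Real.rpow_mul hNpos.le,
        ← Real.rpow_natCast (N : ℝ) 3]
      norm_num
    have hmax : (N : ℝ) * δ ≤ ‖X m‖ := by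
      have h1' : ((N : ℝ) * δ) ^ 2 ≤ ‖X m‖ ^ 2 := by
        have : ((N : ℝ) * δ) ^ 2 = (N : ℝ) ^ 2 * s ^ 2 / P ^ 2 := by
          rw [hδdef]; ring
        rw [this, hP2]
        rw [div_le_iff₀ (by positivity)]
        nlinarith [sq_nonneg (‖X m‖), hNpos]
      have hnd : (0:ℝ) ≤ (N : ℝ) * δ := by positivity
      exact (pow_le_pow_iff_left₀ hnd (norm_nonneg _) two_ne_zero).mp h1'
    -- pigeonhole
    set T : Finset ℕ := (Finset.univ.erase m).image (fun j => ⌊‖X j‖ / δ⌋₊) with hT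
    have hTcard : T.card < N := by
      calc T.card ≤ (Finset.univ.erase m).card := Finset.card_image_le
        _ = N - 1 := by rw [Finset.card_erase_of_mem (Finset.mem_univ m)]; simp
        _ < N := Nat.sub_lt hN one_pos
    obtain ⟨k, hkN, hkT⟩ : ∃ k ∈ Finset.range N, k ∉ T := by
      by_contra h
      push_neg at h
      have : (Finset.range N) ⊆ T := fun k hk => h k hk
      have := Finset.card_le_card this
      simp only [Finset.card_range] at this
      omega
    have hkN' : k < N := Finset.mem_range.mp hkN
    -- no j has floor = k
    have hfloor : ∀ j : Fin N, ⌊‖X j‖ / δ⌋₊ ≠ k := by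
      intro j
      by_cases hjm : j = m
      · subst hjm
        have : (N : ℕ) ≤ ⌊‖X j‖ / δ⌋₊ := by
          apply Nat.le_floor
          rw [le_div_iff₀ hδpos]
          exact_mod_cast hmax
        omega
      · intro hcontra
        apply hkT
        rw [hT]
        exact Finset.mem_image.mpr ⟨j, Finset.mem_erase.mpr ⟨hjm, Finset.mem_univ j⟩, hcontra⟩
    set Z : Finset (Fin N) := Finset.univ.filter (fun n => ((k : ℝ) + 1) * δ ≤ ‖X n‖) with hZ
    have hmZ : m ∈ Z := by
      rw [hZ, Finset.mem_filter]
      refine ⟨Finset.mem_univ m, le_trans ?_ hmax⟩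
      have : ((k : ℝ) + 1) ≤ (N : ℝ) := by exact_mod_cast hkN'
      nlinarith
    have hZne : Z ≠ ∅ := Finset.ne_empty_of_mem hmZ
    -- members of Z have norm ≥ δ; members outside have norm < k δ
    have hout : ∀ j : Fin N, j ∉ Z → ‖X j‖ < (k : ℝ) * δ := by
      intro j hj
      rw [hZ, Finset.mem_filter] at hj
      push_neg at hj
      have hlt : ‖X j‖ < ((k : ℝ) + 1) * δ := hj (Finset.mem_univ j)
      have hfl : ⌊‖X j‖ / δ⌋₊ < k + 1 := by
        rw [Nat.floor_lt (div_nonneg (norm_nonneg _) hδpos.le)]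
        rw [div_lt_iff₀ hδpos]
        push_cast
        linarith
      have hfl2 : ⌊‖X j‖ / δ⌋₊ < k := lt_of_le_of_ne (Nat.lt_succ_iff.mp hfl) (hfloor j)
      have := Nat.lt_floor_add_one (‖X j‖ / δ)
      have hk' : (⌊‖X j‖ / δ⌋₊ : ℝ) + 1 ≤ (k : ℝ) := by exact_mod_cast hfl2
      rw [div_lt_iff₀ hδpos] at this
      nlinarith
    -- the key η computation: a ≥ δ implies η (2 a P / s) = 1
    have hetaone : ∀ a : ℝ, δ ≤ a → η (2 * a * P / s) = 1 := by
      intro a ha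
      rw [hδdef] at ha
      apply h1
      rw [le_div_iff₀ hspos]
      have : s ≤ a * P := by
        calc s = (s / P) * P := by field_simp
          _ ≤ a * P := mul_le_mul_of_nonneg_right ha hPpos.le
      linarith
    have hfZ : f Z = η (2 * s) := by
      rw [hf]
      simp only [if_neg hZne]
      have hp1 : (∏ j ∈ Zᶜ, ∏ n ∈ Z, η (2 * ‖X j - X n‖ * P / s)) = 1 := by
        apply Finset.prod_eq_one
        intro j hj
        apply Finset.prod_eq_one
        intro n hn
        apply hetaone
        have hn' : ((k : ℝ) + 1) * δ ≤ ‖X n‖ := (Finset.mem_filter.mp hn).2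
        have hj' : ‖X j‖ < (k : ℝ) * δ := hout j (Finset.mem_compl.mp hj)
        have := norm_sub_norm_le (X n) (X j)
        rw [norm_sub_rev (X n) (X j)] at this
        linarith
      have hp2 : (∏ n ∈ Z, η (2 * ‖X n‖ * P / s)) = 1 := by
        apply Finset.prod_eq_one
        intro n hn
        apply hetaone
        have hn' : ((k : ℝ) + 1) * δ ≤ ‖X n‖ := (Finset.mem_filter.mp hn).2
        nlinarith [Nat.cast_nonneg (α := ℝ) k]
      rw [hp1, hp2]; ring
    have hempty : f ∅ = 1 - η (2 * s) := by simp [hf]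
    have hsplit : f ∅ + ∑ Z₂ ∈ Finset.univ.erase ∅, f Z₂ = ∑ Z₂ : Finset (Fin N), f Z₂ :=
      Finset.add_sum_erase _ f (Finset.mem_univ _)
    have hZmem : Z ∈ Finset.univ.erase (∅ : Finset (Fin N)) :=
      Finset.mem_erase.mpr ⟨hZne, Finset.mem_univ _⟩
    have hle : f Z ≤ ∑ Z₂ ∈ Finset.univ.erase ∅, f Z₂ :=
      Finset.single_le_sum (fun Z₂ _ => hfnonneg Z₂) hZmem
    rw [← hsplit]
    rw [hempty, hfZ] at *
    linarith
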